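/- For every real constant C > 0 there exists a finite tree T with domination number γ = γ(T) ≥ 2 such that Γ(T) > C·γ·2^γ / ln γ. (In particular, the conjecture of Alvarado, Dantas, Mohr and Rautenbach that Γ(T) = O(γ 2^γ / ln γ) for trees is false.) -/

import Mathlib

/-- A set `D` of vertices is a dominating set if every vertex either lies in `D`
or is adjacent to a vertex of `D`. -/
def IsDominatingSet {V : Type*} (G : SimpleGraph V) (D : Finset V) : Prop :=
  ∀ v : V, v ∈ D ∨ ∃ w ∈ D, G.Adj v w

/-- The domination number: the minimum size of a dominating set. -/
noncomputable def dominationNumber {V : Type*} [Fintype V] (G : SimpleGraph V) : ℕ :=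
  sInf {n | ∃ D : Finset V, IsDominatingSet G D ∧ D.card = n}

/-- The number of minimum dominating sets. -/
noncomputable def numMinDomSets {V : Type*} [Fintype V] (G : SimpleGraph V) : ℕ :=
  Set.ncard {D : Finset V | IsDominatingSet G D ∧ D.card = dominationNumber G}

/-!
Glue `n + 1` copies of the spider with legs of lengths `2, 2, 4` at their centres along a star
(a rooted product of trees, hence a tree). In the spider the vertices `2, 4, 5, 8` have pairwise
disjoint closed neighbourhoods and none is the centre, so in the glued tree every dominating set
needs four vertices in each copy; conversely any of the 18 dominating 4-sets of the spider can be
chosen independently in each copy. Thus `γ = 4m` and `Γ ≥ 18^m = (9/8)^m · 2^γ` for `m = n + 1`,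
and `(9/8)^m` eventually beats `C · 4m`, while `ln γ ≥ 1`.
-/

open SimpleGraph Finset

section ParentGraph

variable {V : Type*} {root : V} {parent : V → V}

variable (root parent) in
def parentGraph : SimpleGraph V := fromRel fun u v => v ≠ root ∧ u = parent v

lemma parentGraph_adj {u v : V} :
    (parentGraph root parent).Adj u v ↔
      u ≠ v ∧ ((v ≠ root ∧ u = parent v) ∨ (u ≠ root ∧ v = parent u)) :=
  fromRel_adj _ _ _

instance [DecidableEq V] : DecidableRel (parentGraph root parent).Adj :=
  fun _ _ => decidable_of_iff' _ parentGraph_adj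

variable [Preorder V] (hparent : ∀ v ≠ root, parent v < v)
include hparent

lemma parentGraph_reachable_root [WellFoundedLT V] (v : V) :
    (parentGraph root parent).Reachable v root := by
  induction v using WellFoundedLT.induction with
  | _ v ih =>
    by_cases hv : v = root
    · exact hv ▸ .rfl
    · have hadj : (parentGraph root parent).Adj (parent v) v :=
        parentGraph_adj.2 ⟨(hparent v hv).ne, .inl ⟨hv, rfl⟩⟩
      exact hadj.symm.reachable.trans (ih _ (hparent v hv))

lemma parentGraph_card_edgeSet :
    Nat.card (parentGraph root parent).edgeSet = Nat.card {v // v ≠ root} := by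
  refine (Nat.card_eq_of_bijective
    (fun v => ⟨s(parent v, v), parentGraph_adj.2 ⟨(hparent v v.2).ne, .inl ⟨v.2, rfl⟩⟩⟩)
    ⟨?_, ?_⟩).symm
  · rintro ⟨v, hv⟩ ⟨w, hw⟩ h
    rcases Sym2.eq_iff.1 (Subtype.ext_iff.1 h) with ⟨-, h⟩ | ⟨hvw, hwv⟩
    · exact Subtype.ext h
    · exact absurd ((hparent v hv).trans_eq hwv |>.trans (hparent w hw)) (hvw ▸ lt_irrefl _)
  · rintro ⟨e, he⟩
    induction e using Sym2.ind with
    | _ u v =>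
      rw [mem_edgeSet, parentGraph_adj] at he
      rcases he.2 with ⟨hv, rfl⟩ | ⟨hu, rfl⟩
      · exact ⟨⟨v, hv⟩, rfl⟩
      · exact ⟨⟨u, hu⟩, Subtype.ext Sym2.eq_swap⟩

theorem parentGraph_isTree [WellFoundedLT V] [Finite V] : (parentGraph root parent).IsTree := by
  classical
  refine isTree_iff_connected_and_card.2 ⟨?_, ?_⟩
  · have : Nonempty V := ⟨root⟩
    exact .mk fun u v => (parentGraph_reachable_root hparent u).trans
      (parentGraph_reachable_root hparent v).symm
  · rw [parentGraph_card_edgeSet hparent, ← Finite.card_option,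
      Nat.card_congr (Equiv.optionSubtypeNe root)]

end ParentGraph

section RootedProduct

variable {I B : Type*}

def rootedProduct (G : SimpleGraph I) (H : SimpleGraph B) (b₀ : B) : SimpleGraph (I × B) where
  Adj x y := (x.1 = y.1 ∧ H.Adj x.2 y.2) ∨ (x.2 = b₀ ∧ y.2 = b₀ ∧ G.Adj x.1 y.1)
  symm := ⟨by
    rintro x y (⟨h₁, h₂⟩ | ⟨h₁, h₂, h₃⟩)
    exacts [.inl ⟨h₁.symm, h₂.symm⟩, .inr ⟨h₂, h₁, h₃.symm⟩]⟩
  loopless := ⟨by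
    rintro x (⟨-, h⟩ | ⟨-, -, h⟩) <;> exact h.ne rfl⟩

variable {G : SimpleGraph I} {H : SimpleGraph B} {b₀ : B}

lemma boxProd_bot_le_rootedProduct : (⊥ : SimpleGraph I).boxProd H ≤ rootedProduct G H b₀ := by
  rintro x y (⟨h, -⟩ | ⟨h, hxy⟩)
  exacts [absurd h id, .inl ⟨hxy, h⟩]

lemma rootedProduct_adj_of_ne {i : I} {a : B} {y : I × B} (ha : a ≠ b₀) :
    (rootedProduct G H b₀).Adj (i, a) y ↔ i = y.1 ∧ H.Adj a y.2 := by
  simp [rootedProduct, ha]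

lemma rootedProduct_parentGraph [DecidableEq B] {i₀ : I} {q : I → I} {p : B → B} :
    rootedProduct (parentGraph i₀ q) (parentGraph b₀ p) b₀ =
      parentGraph (i₀, b₀) fun x => if x.2 = b₀ then (q x.1, b₀) else (x.1, p x.2) := by
  ext ⟨i, a⟩ ⟨j, b⟩
  simp only [rootedProduct, parentGraph_adj]
  split_ifs <;> aesop

theorem rootedProduct_parentGraph_isTree [DecidableEq B] [Finite I] [Finite B]
    [Preorder I] [WellFoundedLT I] [Preorder B] [WellFoundedLT B]
    {i₀ : I} {q : I → I} {p : B → B} (hq : ∀ i ≠ i₀, q i < i) (hp : ∀ b ≠ b₀, p b < b) :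
    (rootedProduct (parentGraph i₀ q) (parentGraph b₀ p) b₀).IsTree := by
  rw [rootedProduct_parentGraph]
  refine parentGraph_isTree fun ⟨i, b⟩ hib => ?_
  dsimp only
  split_ifs with hb
  · subst hb
    exact Prod.mk_lt_mk_of_lt_of_le (hq i fun hi => hib (hi ▸ rfl)) le_rfl
  · exact Prod.mk_lt_mk_of_le_of_lt le_rfl (hp b hb)

end RootedProduct

section Domination

variable {V : Type*} {G G' : SimpleGraph V} {D P : Finset V}

instance [Fintype V] [DecidableEq V] [DecidableRel G.Adj] : DecidablePred (IsDominatingSet G) :=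
  fun D => by unfold IsDominatingSet; infer_instance

/-- `P` is a 2-packing: the closed neighbourhoods of its members are pairwise disjoint. -/
def IsPacking (G : SimpleGraph V) (P : Finset V) : Prop :=
  ∀ w, ∀ u ∈ P, ∀ v ∈ P, (u = w ∨ G.Adj u w) → (v = w ∨ G.Adj v w) → u = v

instance [Fintype V] [DecidableEq V] [DecidableRel G.Adj] : DecidablePred (IsPacking G) :=
  fun P => by unfold IsPacking; infer_instance

lemma IsDominatingSet.mono (hD : IsDominatingSet G D) (h : G ≤ G') : IsDominatingSet G' D :=
  fun v => (hD v).imp_right fun ⟨w, hw, hvw⟩ => ⟨w, hw, h hvw⟩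

lemma IsPacking.card_le (hP : IsPacking G P) (hD : IsDominatingSet G D) : P.card ≤ D.card := by
  refine card_le_card_of_forall_subsingleton (fun u w => u = w ∨ G.Adj u w) (fun u _ => ?_)
    fun w _ u ⟨hu, huw⟩ v ⟨hv, hvw⟩ => hP w u hu v hv huw hvw
  rcases hD u with hu | ⟨w, hw, huw⟩
  exacts [⟨u, hu, .inl rfl⟩, ⟨w, hw, .inr huw⟩]

lemma IsPacking.dominationNumber_eq [Fintype V] (hP : IsPacking G P) (hD : IsDominatingSet G D)
    (hDP : D.card = P.card) : dominationNumber G = P.card :=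
  le_antisymm (Nat.sInf_le ⟨D, hD, hDP⟩)
    (le_csInf ⟨_, D, hD, hDP⟩ fun _ ⟨_, hD', hcard⟩ => hcard ▸ hP.card_le hD')

lemma card_le_numMinDomSets [Fintype V] {𝒟 : Finset (Finset V)}
    (h𝒟 : ∀ D ∈ 𝒟, IsDominatingSet G D ∧ D.card = dominationNumber G) :
    𝒟.card ≤ numMinDomSets G := by
  rw [numMinDomSets, ← Set.ncard_coe_finset]
  exact Set.ncard_le_ncard (fun D hD => h𝒟 D hD) (Set.toFinite _)

end Domination

section Blockwise

variable {I B : Type*} [Fintype I]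

def blockwise (f : I → Finset B) : Finset (I × B) :=
  (univ.sigma f).map (Equiv.sigmaEquivProd I B).toEmbedding

@[simp]
lemma mem_blockwise {f : I → Finset B} {i : I} {b : B} : (i, b) ∈ blockwise f ↔ b ∈ f i := by
  simp [blockwise]

lemma card_blockwise (f : I → Finset B) : (blockwise f).card = ∑ i, (f i).card := by
  simp [blockwise]

lemma blockwise_injective : Function.Injective (blockwise : (I → Finset B) → Finset (I × B)) :=
  fun f g h => funext fun i => Finset.ext fun b => by
    simpa using congrArg ((i, b) ∈ ·) h

lemma IsDominatingSet.blockwise {H : SimpleGraph B} {f : I → Finset B}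
    (hf : ∀ i, IsDominatingSet H (f i)) :
    IsDominatingSet ((⊥ : SimpleGraph I).boxProd H) (blockwise f) := by
  rintro ⟨i, b⟩
  rcases hf i b with hb | ⟨c, hc, hbc⟩
  exacts [.inl (mem_blockwise.2 hb), .inr ⟨(i, c), mem_blockwise.2 hc, .inr ⟨hbc, rfl⟩⟩]

end Blockwise

section RootedProductDomination

variable {I B : Type*} [Fintype I] {G : SimpleGraph I} {H : SimpleGraph B} {b₀ : B}
  {P D : Finset B}

lemma IsPacking.rootedProduct_univ_product (hP : IsPacking H P) (hb₀ : b₀ ∉ P) :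
    IsPacking (rootedProduct G H b₀) (univ ×ˢ P) := by
  have block {w : I × B} {i : I} {a : B} (ha : a ∈ P)
      (h : (i, a) = w ∨ (rootedProduct G H b₀).Adj (i, a) w) :
      i = w.1 ∧ (a = w.2 ∨ H.Adj a w.2) := by
    rcases h with rfl | h
    · exact ⟨rfl, .inl rfl⟩
    · obtain ⟨hi, ha⟩ := (rootedProduct_adj_of_ne (ne_of_mem_of_not_mem ha hb₀)).1 h
      exact ⟨hi, .inr ha⟩
  rintro w ⟨i, a⟩ hia ⟨j, b⟩ hjb hw₁ hw₂
  rw [mem_product] at hia hjb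
  obtain ⟨rfl, ha⟩ := block hia.2 hw₁
  obtain ⟨rfl, hb⟩ := block hjb.2 hw₂
  rw [hP w.2 a hia.2 b hjb.2 ha hb]

variable [Fintype B] (hP : IsPacking H P) (hb₀ : b₀ ∉ P) (hD : IsDominatingSet H D)
  (hDP : D.card = P.card)
include hP hb₀ hD hDP

theorem dominationNumber_rootedProduct :
    dominationNumber (rootedProduct G H b₀) = Fintype.card I * P.card := by
  have := (hP.rootedProduct_univ_product hb₀ (G := G)).dominationNumber_eq
    ((IsDominatingSet.blockwise fun _ => hD).mono boxProd_bot_le_rootedProduct)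
    (by simp [card_blockwise, hDP])
  rwa [card_product, card_univ] at this

theorem card_pow_le_numMinDomSets_rootedProduct [DecidableEq I] {𝒜 : Finset (Finset B)}
    (h𝒜 : ∀ A ∈ 𝒜, IsDominatingSet H A ∧ A.card = P.card) :
    𝒜.card ^ Fintype.card I ≤ numMinDomSets (rootedProduct G H b₀) := by
  calc 𝒜.card ^ Fintype.card I
      = ((Fintype.piFinset fun _ : I => 𝒜).map ⟨blockwise, blockwise_injective⟩).card := by
        rw [card_map, Fintype.card_piFinset, prod_const, card_univ]
    _ ≤ numMinDomSets (rootedProduct G H b₀) := by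
      refine card_le_numMinDomSets fun _ h => ?_
      obtain ⟨f, hf, rfl⟩ := mem_map.1 h
      rw [Fintype.mem_piFinset] at hf
      refine ⟨(IsDominatingSet.blockwise fun i => (h𝒜 _ (hf i)).1).mono
        boxProd_bot_le_rootedProduct, ?_⟩
      simp [card_blockwise, (h𝒜 _ (hf _)).2, dominationNumber_rootedProduct hP hb₀ hD hDP]

end RootedProductDomination

/-- The spider with centre `0` and legs `0-1-2`, `0-3-4`, `0-5-6-7-8`. -/
def spiderParent : Fin 9 → Fin 9 := ![0, 0, 1, 0, 3, 0, 5, 6, 7]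

abbrev spider : SimpleGraph (Fin 9) := parentGraph 0 spiderParent

lemma spiderParent_lt : ∀ b ≠ 0, spiderParent b < b := by decide

lemma isPacking_spider : IsPacking spider {2, 4, 5, 8} := by decide

lemma isDominatingSet_spider : IsDominatingSet spider {1, 3, 5, 7} := by decide

lemma card_spider_dominating_four :
    #{D : Finset (Fin 9) | IsDominatingSet spider D ∧ D.card = 4} = 18 := by decide

def spiderTree (n : ℕ) : SimpleGraph (Fin (n + 1) × Fin 9) :=
  rootedProduct (parentGraph 0 fun _ => 0) spider 0

lemma spiderTree_isTree (n : ℕ) : (spiderTree n).IsTree :=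
  rootedProduct_parentGraph_isTree (fun _ => Fin.pos_of_ne_zero) spiderParent_lt

lemma dominationNumber_spiderTree (n : ℕ) : dominationNumber (spiderTree n) = 4 * (n + 1) := by
  rw [spiderTree, dominationNumber_rootedProduct isPacking_spider (by decide)
    isDominatingSet_spider rfl, Fintype.card_fin, mul_comm]
  rfl

lemma eighteen_pow_le_numMinDomSets_spiderTree (n : ℕ) :
    18 ^ (n + 1) ≤ numMinDomSets (spiderTree n) := by
  have := card_pow_le_numMinDomSets_rootedProduct (G := parentGraph (0 : Fin (n + 1)) fun _ => 0)
    (b₀ := 0) isPacking_spider (by decide) isDominatingSet_spider rfl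
    (𝒜 := {D | IsDominatingSet spider D ∧ D.card = 4}) fun _ hA => (mem_filter.1 hA).2
  rwa [card_spider_dominating_four, Fintype.card_fin] at this

lemma exists_mul_two_pow_div_log_lt (C : ℝ) (hC : 0 < C) :
    ∃ n : ℕ, C * ((4 * (n + 1) : ℕ) : ℝ) * 2 ^ (4 * (n + 1)) / Real.log ((4 * (n + 1) : ℕ) : ℝ)
      < 18 ^ (n + 1) := by
  have hlim : Filter.Tendsto (fun n : ℕ => ((n + 1 : ℕ) : ℝ) ^ 1 / (9 / 8 : ℝ) ^ (n + 1))
      Filter.atTop (nhds 0) :=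
    (tendsto_pow_const_div_const_pow_of_one_lt 1 (by norm_num)).comp
      (Filter.tendsto_add_atTop_nat 1)
  obtain ⟨n, hn⟩ := (hlim.eventually (gt_mem_nhds (inv_pos.2 (by positivity : 0 < 4 * C)))).exists
  refine ⟨n, ?_⟩
  have hlog : 1 ≤ Real.log ((4 * (n + 1) : ℕ) : ℝ) := by
    rw [Real.le_log_iff_exp_le (by positivity)]
    have := Real.exp_one_lt_d9
    push_cast
    linarith
  have hsmall : 4 * C * (n + 1) < (9 / 8 : ℝ) ^ (n + 1) := by
    rw [pow_one, div_lt_iff₀ (by positivity), inv_mul_eq_div, lt_div_iff₀ (by positivity)] at hn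
    push_cast at hn
    linarith
  calc C * ((4 * (n + 1) : ℕ) : ℝ) * 2 ^ (4 * (n + 1)) / Real.log ((4 * (n + 1) : ℕ) : ℝ)
      ≤ 4 * C * (n + 1) * 16 ^ (n + 1) := by
        have hnum : C * ((4 * (n + 1) : ℕ) : ℝ) * 2 ^ (4 * (n + 1)) =
            4 * C * (n + 1) * 16 ^ (n + 1) := by
          rw [pow_mul]
          push_cast
          ring
        exact hnum ▸ div_le_self (by positivity) hlog
    _ < (9 / 8) ^ (n + 1) * 16 ^ (n + 1) := by gcongr
    _ = 18 ^ (n + 1) := by rw [← mul_pow]; norm_num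

/-- For every `C > 0` there is a finite tree `T` with domination number `γ ≥ 2` such that
`Γ(T) > C · γ · 2^γ / ln γ`; hence `Γ(T) = O(γ 2^γ / ln γ)` fails for trees. -/
theorem not_bigO_gamma_two_pow (C : ℝ) (hC : 0 < C) :
    ∃ (V : Type) (_ : Fintype V) (G : SimpleGraph V),
      G.IsTree ∧ 2 ≤ dominationNumber G ∧
      C * (dominationNumber G : ℝ) * 2 ^ dominationNumber G /
          Real.log (dominationNumber G) < (numMinDomSets G : ℝ) := by
  obtain ⟨n, hn⟩ := exists_mul_two_pow_div_log_lt C hC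
  refine ⟨_, inferInstance, spiderTree n, spiderTree_isTree n, ?_, ?_⟩
  · rw [dominationNumber_spiderTree]
    omega
  · rw [dominationNumber_spiderTree]
    exact hn.trans_le (by exact_mod_cast eighteen_pow_le_numMinDomSets_spiderTree n)
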